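/- arXiv:2405.06759 — 3 statements merged into one kernel-verified Lean document; each statement's English description precedes it below -/
import Mathlib

section
/- If a nonnegative differentiable function W on [0, T) satisfies W'(t) ≤ (2/(T−t))W(t) − kβ₁(T²/(T−t)²)W(t) for all t ∈ [0, T), where k, β₁, T > 0, then W(t) ≤ W(0)·(T²/(T−t)²)·exp(−kβ₁ T t/(T−t)) for all t ∈ [0, T). -/
/-- A nonnegative differentiable function satisfying the differential inequality
`W' ≤ (2/(T−t))W − kβ₁(T²/(T−t)²)W` on `[0,T)` obeys the explicit bound. -/
theorem stmt_2 (T k β₁ : ℝ) (hT : 0 < T) (hk : 0 < k) (hβ₁ : 0 < β₁)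
    (W W' : ℝ → ℝ) (hWnn : ∀ t ∈ Set.Ico (0:ℝ) T, 0 ≤ W t)
    (hderiv : ∀ t ∈ Set.Ico (0:ℝ) T, HasDerivAt W (W' t) t)
    (hineq : ∀ t ∈ Set.Ico (0:ℝ) T,
      W' t ≤ (2 / (T - t)) * W t - k * β₁ * (T ^ 2 / (T - t) ^ 2) * W t) :
    ∀ t ∈ Set.Ico (0:ℝ) T,
      W t ≤ W 0 * (T ^ 2 / (T - t) ^ 2) * Real.exp (-k * β₁ * (T * t / (T - t))) := by
  set φ : ℝ → ℝ := fun s => k * β₁ * (T * s / (T - s)) with hφdef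
  set F : ℝ → ℝ := fun s => W s * (T - s) ^ 2 * Real.exp (φ s) with hFdef
  set D : ℝ → ℝ := fun s =>
    (W' s * (T - s) ^ 2 + W s * ((2 : ℕ) * (T - s) ^ 1 * (-1))) * Real.exp (φ s)
      + W s * (T - s) ^ 2 * (Real.exp (φ s) * (k * β₁ * T ^ 2 / (T - s) ^ 2)) with hDdef
  have hφ : ∀ s ∈ Set.Ico (0:ℝ) T, HasDerivAt φ (k * β₁ * T ^ 2 / (T - s) ^ 2) s := by
    intro s hs
    have hne : T - s ≠ 0 := sub_ne_zero.mpr (ne_of_gt hs.2)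
    have h1 : HasDerivAt (fun s => T * s / (T - s))
        ((T * 1 * (T - s) - T * s * (-1)) / (T - s) ^ 2) s :=
      HasDerivAt.div ((hasDerivAt_id s).const_mul T) ((hasDerivAt_id s).const_sub T) hne
    have h2 := h1.const_mul (k * β₁)
    refine h2.congr_deriv ?_
    ring
  have hFd : ∀ s ∈ Set.Ico (0:ℝ) T, HasDerivAt F (D s) s := by
    intro s hs
    have hsq : HasDerivAt (fun s => (T - s) ^ 2) ((2 : ℕ) * (T - s) ^ 1 * (-1)) s :=
      ((hasDerivAt_id s).const_sub T).pow 2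
    have hG : HasDerivAt (fun s => W s * (T - s) ^ 2)
        (W' s * (T - s) ^ 2 + W s * ((2 : ℕ) * (T - s) ^ 1 * (-1))) s :=
      (hderiv s hs).mul hsq
    have hexp : HasDerivAt (fun s => Real.exp (φ s))
        (Real.exp (φ s) * (k * β₁ * T ^ 2 / (T - s) ^ 2)) s := (hφ s hs).exp
    exact hG.mul hexp
  have hDnp : ∀ s ∈ Set.Ico (0:ℝ) T, D s ≤ 0 := by
    intro s hs
    have hTs : 0 < T - s := sub_pos.mpr hs.2
    have hne : T - s ≠ 0 := ne_of_gt hTs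
    have e1 : ((2 / (T - s)) * W s - k * β₁ * (T ^ 2 / (T - s) ^ 2) * W s) * (T - s) ^ 2
        = 2 * (T - s) * W s - k * β₁ * T ^ 2 * W s := by
      field_simp
    have key2 : W' s * (T - s) ^ 2 ≤ 2 * (T - s) * W s - k * β₁ * T ^ 2 * W s :=
      le_trans (mul_le_mul_of_nonneg_right (hineq s hs) (sq_nonneg _)) (le_of_eq e1)
    have e2 : W s * (T - s) ^ 2 * (Real.exp (φ s) * (k * β₁ * T ^ 2 / (T - s) ^ 2))
        = W s * (k * β₁ * T ^ 2) * Real.exp (φ s) := by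
      field_simp
    have hepos : 0 < Real.exp (φ s) := Real.exp_pos _
    simp only [hDdef]
    rw [e2]
    push_cast
    nlinarith [mul_le_mul_of_nonneg_right key2 hepos.le]
  intro t ht
  obtain ⟨ht0, htT⟩ := ht
  have hsub : Set.Icc (0:ℝ) t ⊆ Set.Ico (0:ℝ) T :=
    fun s hs => ⟨hs.1, lt_of_le_of_lt hs.2 htT⟩
  have hcont : ContinuousOn F (Set.Icc 0 t) :=
    fun s hs => ((hFd s (hsub hs)).continuousAt).continuousWithinAt
  have hintsub : interior (Set.Icc (0:ℝ) t) ⊆ Set.Ico (0:ℝ) T := by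
    rw [interior_Icc]
    exact fun s hs => hsub ⟨hs.1.le, hs.2.le⟩
  have hdiff : DifferentiableOn ℝ F (interior (Set.Icc 0 t)) :=
    fun s hs => ((hFd s (hintsub hs)).differentiableAt).differentiableWithinAt
  have hnonpos : ∀ s ∈ interior (Set.Icc (0:ℝ) t), deriv F s ≤ 0 := by
    intro s hs
    rw [(hFd s (hintsub hs)).deriv]
    exact hDnp s (hintsub hs)
  have hanti := antitoneOn_of_deriv_nonpos (convex_Icc 0 t) hcont hdiff hnonpos
  have hFt : F t ≤ F 0 :=
    hanti (Set.left_mem_Icc.mpr ht0) (Set.right_mem_Icc.mpr ht0) ht0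
  have hF0 : F 0 = W 0 * T ^ 2 := by
    simp [hFdef, hφdef]
  have hTs : 0 < T - t := sub_pos.mpr htT
  have hpos : 0 < (T - t) ^ 2 * Real.exp (φ t) := by positivity
  have hfin : W t * ((T - t) ^ 2 * Real.exp (φ t)) ≤ W 0 * T ^ 2 := by
    calc W t * ((T - t) ^ 2 * Real.exp (φ t)) = F t := by rw [hFdef]; ring
      _ ≤ F 0 := hFt
      _ = W 0 * T ^ 2 := hF0
  have hexpneg : Real.exp (-k * β₁ * (T * t / (T - t))) = (Real.exp (φ t))⁻¹ := by
    rw [← Real.exp_neg]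
    congr 1
    simp [hφdef]
  rw [hexpneg]
  have heq : W 0 * (T ^ 2 / (T - t) ^ 2) * (Real.exp (φ t))⁻¹
      = (W 0 * T ^ 2) / ((T - t) ^ 2 * Real.exp (φ t)) := by
    field_simp
  rw [heq]
  exact (le_div_iff₀ hpos).mpr hfin
end

section
/- Suppose h : ℝⁿ → ℝ and the steady-state map π : ℝ → ℝⁿ satisfy: (i) for each û, L_f h(π(û)) + L_g h(π(û))·û − k·|L_g h(π(û))|² = 0; (ii) for all x in a domain D, L_f h(x) + L_g h(x)·u* − k|L_g h(x)|² ≤ −α₁‖x − π(u*)‖². Then L_g h(π(û))·(û − u*) ≥ α₁‖π(û) − π(u*)‖² for all û with π(û) ∈ D. -/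
/-- From the steady-state relation and the stability assumption, the gradient-like
quantity satisfies `L_g h(π(û))·(û − u*) ≥ α₁‖π(û) − π(u*)‖²`. -/
theorem stmt_4 (n : ℕ) (Lfh Lgh : EuclideanSpace ℝ (Fin n) → ℝ)
    (π : ℝ → EuclideanSpace ℝ (Fin n)) (D : Set (EuclideanSpace ℝ (Fin n)))
    (k α₁ ustar : ℝ) (hk : 0 < k) (hα₁ : 0 < α₁)
    (hss : ∀ uhat : ℝ, Lfh (π uhat) + Lgh (π uhat) * uhat - k * |Lgh (π uhat)| ^ 2 = 0)
    (hstab : ∀ x ∈ D,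
      Lfh x + Lgh x * ustar - k * |Lgh x| ^ 2 ≤ -α₁ * ‖x - π ustar‖ ^ 2) :
    ∀ uhat : ℝ, π uhat ∈ D →
      Lgh (π uhat) * (uhat - ustar) ≥ α₁ * ‖π uhat - π ustar‖ ^ 2 := by
  intro uhat hD
  have h1 := hss uhat
  have h2 := hstab _ hD
  nlinarith [h1, h2]
end

section
/- If between sample times ‖X(τ)‖ ≤ e^{2L(τ−τ_{mn*})}‖X(τ_{mn*})‖ + (c/(2L))(e^{2L(τ−τ_{mn*})} − 1) for τ ∈ [τ_{mn*}, τ_{(m+1)n*}) with spacing n*δ, δ = 2πε, and at sample times ‖X(τ_{mn*})‖ ≤ min(e^{−λ(τ_{mn*}−τ₀)}‖X₀‖, √M₁), then for all τ ≥ τ₀: ‖X(τ)‖ ≤ e^{(λ+2L)2πn*ε}e^{−λ(τ−τ₀)}‖X₀‖ + e^{4πLn*ε}√M₁ + (c/(2L))(e^{4πLn*ε} − 1). -/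
/-- Combining intersample growth with sampled decay gives semi-global practical
exponential stability in the transformed timescale. -/
theorem stmt_15 (m : ℕ) (L c lam M₁ ε τ₀ : ℝ) (nstar : ℕ)
    (hL : 0 < L) (hc : 0 < c) (hlam : 0 < lam) (hM₁ : 0 < M₁) (hε : 0 < ε)
    (hnstar : 0 < nstar)
    (X : ℝ → EuclideanSpace ℝ (Fin m))
    (hinter : ∀ M : ℕ, ∀ τ ∈ Set.Ico (τ₀ + 2 * Real.pi * ε * (M * nstar))
        (τ₀ + 2 * Real.pi * ε * ((M + 1) * nstar)),
      ‖X τ‖ ≤ Real.exp (2 * L * (τ - (τ₀ + 2 * Real.pi * ε * (M * nstar))))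
          * ‖X (τ₀ + 2 * Real.pi * ε * (M * nstar))‖
        + (c / (2 * L))
          * (Real.exp (2 * L * (τ - (τ₀ + 2 * Real.pi * ε * (M * nstar)))) - 1))
    (hsample : ∀ M : ℕ, ‖X (τ₀ + 2 * Real.pi * ε * (M * nstar))‖ ≤
      min (Real.exp (-lam * (2 * Real.pi * ε * (M * nstar))) * ‖X τ₀‖)
        (Real.sqrt M₁)) :
    ∀ τ ≥ τ₀, ‖X τ‖ ≤
      Real.exp ((lam + 2 * L) * (2 * Real.pi * nstar * ε))
          * Real.exp (-lam * (τ - τ₀)) * ‖X τ₀‖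
        + Real.exp (4 * Real.pi * L * nstar * ε) * Real.sqrt M₁
        + (c / (2 * L)) * (Real.exp (4 * Real.pi * L * nstar * ε) - 1) := by
  intro τ hτ
  have hπ := Real.pi_pos
  set δ : ℝ := 2 * Real.pi * ε * nstar with hδdef
  have hδ : 0 < δ := by positivity
  set s : ℝ := (τ - τ₀) / δ with hsdef
  have hs : 0 ≤ s := div_nonneg (by linarith) hδ.le
  set M : ℕ := ⌊s⌋₊ with hM
  have h1 : (M : ℝ) ≤ s := Nat.floor_le hs
  have h2 : s < M + 1 := Nat.lt_floor_add_one s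
  have hsδ : s * δ = τ - τ₀ := div_mul_cancel₀ _ hδ.ne'
  have h1' : (M : ℝ) * δ ≤ τ - τ₀ := by
    have := mul_le_mul_of_nonneg_right h1 hδ.le; linarith
  have h2' : τ - τ₀ < ((M : ℝ) + 1) * δ := by
    have := mul_lt_mul_of_pos_right h2 hδ; linarith
  have hmem : τ ∈ Set.Ico (τ₀ + 2 * Real.pi * ε * (M * nstar))
      (τ₀ + 2 * Real.pi * ε * ((M + 1) * nstar)) := by
    constructor
    · have : 2 * Real.pi * ε * ((M : ℝ) * nstar) = (M : ℝ) * δ := by ring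
      rw [this]; linarith
    · have : 2 * Real.pi * ε * (((M : ℝ) + 1) * nstar) = ((M : ℝ) + 1) * δ := by ring
      rw [this]; linarith
  have hb := hinter M τ hmem
  have hsamp := (hsample M).trans (le_of_eq rfl)
  have hsamp2 : ‖X (τ₀ + 2 * Real.pi * ε * (M * nstar))‖ ≤ Real.sqrt M₁ :=
    hsamp.trans (min_le_right _ _)
  have hΔ : τ - (τ₀ + 2 * Real.pi * ε * ((M : ℝ) * nstar)) < δ := by
    have : 2 * Real.pi * ε * ((M : ℝ) * nstar) = (M : ℝ) * δ := by ring
    rw [this]; linarith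
  have hexp1 : Real.exp (2 * L * (τ - (τ₀ + 2 * Real.pi * ε * ((M : ℝ) * nstar))))
      ≤ Real.exp (4 * Real.pi * L * nstar * ε) := by
    apply Real.exp_le_exp.2
    have : 4 * Real.pi * L * (nstar : ℝ) * ε = 2 * L * δ := by rw [hδdef]; ring
    rw [this]
    nlinarith [hΔ, hL]
  have hnorm0 : (0:ℝ) ≤ ‖X (τ₀ + 2 * Real.pi * ε * (M * nstar))‖ := norm_nonneg _
  have hsqrt0 : (0:ℝ) ≤ Real.sqrt M₁ := Real.sqrt_nonneg _
  have hcdl : 0 < c / (2 * L) := by positivity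
  have hterm1 : 0 ≤ Real.exp ((lam + 2 * L) * (2 * Real.pi * nstar * ε))
      * Real.exp (-lam * (τ - τ₀)) * ‖X τ₀‖ := by positivity
  have hmul : Real.exp (2 * L * (τ - (τ₀ + 2 * Real.pi * ε * ((M : ℝ) * nstar))))
      * ‖X (τ₀ + 2 * Real.pi * ε * (M * nstar))‖
      ≤ Real.exp (4 * Real.pi * L * nstar * ε) * Real.sqrt M₁ :=
    mul_le_mul hexp1 hsamp2 hnorm0 (Real.exp_pos _).le
  have hmul2 : (c / (2 * L)) *
      (Real.exp (2 * L * (τ - (τ₀ + 2 * Real.pi * ε * ((M : ℝ) * nstar)))) - 1)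
      ≤ (c / (2 * L)) * (Real.exp (4 * Real.pi * L * nstar * ε) - 1) := by
    apply mul_le_mul_of_nonneg_left (by linarith) hcdl.le
  linarith
end
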